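/- Let Γ be a group acting by homeomorphisms on a Hausdorff topological space Ω, such that the action of Γ on Ω is strongly hyperbolic and the action of Γ on L_Γ is strongly faithful. Let N be a normal subgroup of Γ which contains a hyperbolic homeomorphism. Then the closure of L_N equals the closure of L_Γ, and N is a Powers group. -/
import Mathlib


open Filter Set

section PowersDefs

def IsPowersGroup (Γ : Type*) [Group Γ] : Prop :=
  Nontrivial Γ ∧
    ∀ F : Finset Γ, (1 : Γ) ∉ F → ∀ N : ℕ, 1 ≤ N →
      ∃ (C : Set Γ) (g : Fin N → Γ),
        (∀ f ∈ F, (fun x => f * x) '' C ∩ C = ∅) ∧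
        ∀ j k : Fin N, j ≠ k →
          (fun x => g j * x) '' Cᶜ ∩ (fun x => g k * x) '' Cᶜ = ∅

def IsSubnormalIn {Γ : Type*} [Group Γ] (N : Subgroup Γ) : Prop :=
  ∃ (k : ℕ) (c : ℕ → Subgroup Γ), c 0 = N ∧ c k = ⊤ ∧
    ∀ i < k, c i ≤ c (i + 1) ∧ ∀ x ∈ c (i + 1), ∀ y ∈ c i, x * y * x⁻¹ ∈ c i

def IsStronglyPowersGroup (Γ : Type*) [Group Γ] : Prop :=
  ∀ N : Subgroup Γ, IsSubnormalIn N → N ≠ ⊥ → IsPowersGroup N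

end PowersDefs

section HomeoDefs

variable {Γ : Type*} [Group Γ]

/-- Each group element acts continuously (hence, the group acting, by homeomorphisms). -/
def ActsByHomeos (Γ : Type*) [Group Γ] (Ω : Type*) [TopologicalSpace Ω] [MulAction Γ Ω] :
    Prop :=
  ∀ γ : Γ, Continuous fun x : Ω => γ • x

/-- `ω` is a sink of the hyperbolic homeomorphism `γ`: there is a source `α` fixed by `γ`
such that `γ` is hyperbolic with attracting point `ω` and repelling point `α`. -/
def IsSinkOf {Ω : Type*} [TopologicalSpace Ω] [MulAction Γ Ω] (γ : Γ) (ω : Ω) : Prop :=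
  ∃ α : Ω, γ • α = α ∧ γ • ω = ω ∧
    ∀ U ∈ nhds α, ∀ W ∈ nhds ω, ∀ᶠ n : ℕ in Filter.atTop,
      (∀ x : Ω, x ∉ U → γ ^ n • x ∈ W) ∧ (∀ x : Ω, x ∉ W → γ⁻¹ ^ n • x ∈ U)

/-- A hyperbolic homeomorphism. -/
def IsHypHomeo (Ω : Type*) [TopologicalSpace Ω] [MulAction Γ Ω] (γ : Γ) : Prop :=
  ∃ ω : Ω, IsSinkOf γ ω

/-- Two homeomorphisms are transverse if they have no common fixed point. -/
def TransverseOn (Ω : Type*) [MulAction Γ Ω] (γ δ : Γ) : Prop :=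
  ¬ ∃ x : Ω, γ • x = x ∧ δ • x = x

/-- A strongly hyperbolic action by homeomorphisms: there is a pair of transverse hyperbolic
homeomorphisms in the group. -/
def StronglyHypHomeoAction (Γ : Type*) [Group Γ] (Ω : Type*) [TopologicalSpace Ω]
    [MulAction Γ Ω] : Prop :=
  ∃ γ δ : Γ, IsHypHomeo Ω γ ∧ IsHypHomeo Ω δ ∧ TransverseOn Ω γ δ

/-- The set `L_N` of sinks of hyperbolic elements of a subgroup `N`. -/
def sinkSet (Ω : Type*) [TopologicalSpace Ω] [MulAction Γ Ω] (N : Subgroup Γ) : Set Ω :=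
  {ω : Ω | ∃ γ ∈ N, IsSinkOf γ ω}

/-- A strongly faithful action on the subset `S`. -/
def StronglyFaithfulOn (Γ : Type*) [Group Γ] {Ω : Type*} [MulAction Γ Ω] (S : Set Ω) :
    Prop :=
  ∀ F : Finset Γ, (1 : Γ) ∉ F → ∃ ω ∈ S, ∀ γ ∈ F, γ • ω ≠ ω

/-- A minimal action by homeomorphisms: the only invariant closed subsets are trivial. -/
def MinimalHomeoAction (Γ : Type*) [Group Γ] (Ω : Type*) [TopologicalSpace Ω]
    [MulAction Γ Ω] : Prop :=
  ∀ C : Set Ω, IsClosed C → (∀ γ : Γ, ∀ x ∈ C, γ • x ∈ C) → C = ∅ ∨ C = Set.univ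

end HomeoDefs

section MyAux

variable {Γ : Type*} [Group Γ] {Ω : Type*} [TopologicalSpace Ω] [MulAction Γ Ω]

/-- `γ` is hyperbolic with sink `ω` and source `α`. -/
def SinkSrc (γ : Γ) (ω α : Ω) : Prop :=
  γ • α = α ∧ γ • ω = ω ∧
    ∀ U ∈ nhds α, ∀ W ∈ nhds ω, ∀ᶠ n : ℕ in Filter.atTop,
      (∀ x : Ω, x ∉ U → γ ^ n • x ∈ W) ∧ (∀ x : Ω, x ∉ W → γ⁻¹ ^ n • x ∈ U)

lemma isSinkOf_iff {γ : Γ} {ω : Ω} : IsSinkOf γ ω ↔ ∃ α : Ω, SinkSrc γ ω α := Iff.rfl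

omit [TopologicalSpace Ω] in
lemma fixed_pow {γ : Γ} {x : Ω} (h : γ • x = x) : ∀ n : ℕ, γ ^ n • x = x := by
  intro n
  induction n with
  | zero => simp
  | succ n ih => rw [pow_succ, mul_smul, h, ih]

lemma SinkSrc.inv {γ : Γ} {ω α : Ω} (h : SinkSrc γ ω α) : SinkSrc γ⁻¹ α ω := by
  obtain ⟨hα, hω, h⟩ := h
  refine ⟨by rw [inv_smul_eq_iff, hω], by rw [inv_smul_eq_iff, hα], ?_⟩
  intro U hU W hW
  filter_upwards [h W hW U hU] with n hn
  refine ⟨hn.2, ?_⟩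
  simpa using hn.1

lemma SinkSrc.sq {γ : Γ} {ω α : Ω} (h : SinkSrc γ ω α) : SinkSrc (γ ^ 2) ω α := by
  obtain ⟨hα, hω, h⟩ := h
  refine ⟨by rw [fixed_pow hα], by rw [fixed_pow hω], ?_⟩
  intro U hU W hW
  rw [Filter.eventually_atTop]
  obtain ⟨n0, hn0⟩ := Filter.eventually_atTop.mp (h U hU W hW)
  refine ⟨n0, fun n hn => ?_⟩
  have h2 : 2 * n ≥ n0 := le_trans hn (by omega)
  refine ⟨fun x hx => ?_, fun x hx => ?_⟩
  · have := (hn0 _ h2).1 x hx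
    rwa [pow_mul] at this
  · have := (hn0 _ h2).2 x hx
    rwa [pow_mul, inv_pow] at this

lemma SinkSrc.conj (hcont : ActsByHomeos Γ Ω) {γ : Γ} {ω α : Ω} (h : SinkSrc γ ω α)
    (g : Γ) : SinkSrc (g * γ * g⁻¹) (g • ω) (g • α) := by
  obtain ⟨hα, hω, h⟩ := h
  have key : ∀ (δ : Γ) (y : Ω), δ • y = y → (g * δ * g⁻¹) • (g • y) = g • y := by
    intro δ y hy
    rw [mul_smul, mul_smul, inv_smul_smul, hy]
  refine ⟨key γ α hα, key γ ω hω, ?_⟩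
  intro U hU W hW
  have hU' : (fun x : Ω => g • x) ⁻¹' U ∈ nhds α := by
    apply ContinuousAt.preimage_mem_nhds (hcont g).continuousAt
    simpa using hU
  have hW' : (fun x : Ω => g • x) ⁻¹' W ∈ nhds ω := by
    apply ContinuousAt.preimage_mem_nhds (hcont g).continuousAt
    simpa using hW
  filter_upwards [h _ hU' _ hW'] with n hn
  have hpow : ∀ (δ : Γ) (m : ℕ), (g * δ * g⁻¹) ^ m = g * δ ^ m * g⁻¹ := by
    intro δ m
    induction m with
    | zero => simp
    | succ m ih => rw [pow_succ, ih, pow_succ]; group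
  constructor
  · intro x hx
    have hx' : g⁻¹ • x ∉ (fun x : Ω => g • x) ⁻¹' U := by
      simpa [Set.mem_preimage, smul_inv_smul] using hx
    have := hn.1 _ hx'
    rw [Set.mem_preimage] at this
    rw [hpow, mul_smul, mul_smul]
    exact this
  · intro x hx
    have hx' : g⁻¹ • x ∉ (fun x : Ω => g • x) ⁻¹' W := by
      simpa [Set.mem_preimage, smul_inv_smul] using hx
    have := hn.2 _ hx'
    rw [Set.mem_preimage] at this
    have hinv : (g * γ * g⁻¹)⁻¹ = g * γ⁻¹ * g⁻¹ := by group
    rw [hinv, hpow, mul_smul, mul_smul]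
    exact this

lemma SinkSrc.fix_mem [T1Space Ω] {γ : Γ} {ω α : Ω} (h : SinkSrc γ ω α) {x : Ω}
    (hx : γ • x = x) : x = α ∨ x = ω := by
  by_contra hc
  push_neg at hc
  obtain ⟨hxα, hxω⟩ := hc
  obtain ⟨hα, hω, h⟩ := h
  have hU : ({x}ᶜ : Set Ω) ∈ nhds α :=
    IsOpen.mem_nhds isOpen_compl_singleton (by simpa using hxα.symm)
  have hW : ({x}ᶜ : Set Ω) ∈ nhds ω :=
    IsOpen.mem_nhds isOpen_compl_singleton (by simpa using hxω.symm)
  obtain ⟨n, hn⟩ := (h _ hU _ hW).exists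
  have := hn.1 x (by simp)
  rw [fixed_pow hx] at this
  simp at this

lemma SinkSrc.attract [T1Space Ω] {γ : Γ} {ω α : Ω} (h : SinkSrc γ ω α) {x : Ω}
    (hx : x ≠ α) {W : Set Ω} (hW : W ∈ nhds ω) : ∃ n : ℕ, γ ^ n • x ∈ W := by
  obtain ⟨hα, hω, h⟩ := h
  have hU : ({x}ᶜ : Set Ω) ∈ nhds α :=
    IsOpen.mem_nhds isOpen_compl_singleton (by simpa using hx.symm)
  obtain ⟨n, hn⟩ := (h _ hU _ hW).exists
  exact ⟨n, hn.1 x (by simp)⟩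

end MyAux
section MyAux2

variable {Γ : Type*} [Group Γ] {Ω : Type*} [TopologicalSpace Ω] [MulAction Γ Ω]

lemma sink_mem_closed_inv [T2Space Ω] (hsh : StronglyHypHomeoAction Γ Ω)
    {C : Set Ω} (hC : IsClosed C) (hinv : ∀ g : Γ, ∀ x ∈ C, g • x ∈ C)
    (hne : C.Nonempty) {γ : Γ} {ω α : Ω} (h : SinkSrc γ ω α) : ω ∈ C := by
  obtain ⟨x0, hx0⟩ := hne
  by_cases hca : ∃ y ∈ C, y ≠ α
  · obtain ⟨y, hyC, hyα⟩ := hca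
    rw [← hC.closure_eq, mem_closure_iff]
    intro O hO hωO
    obtain ⟨n, hn⟩ := h.attract hyα (hO.mem_nhds hωO)
    exact ⟨γ ^ n • y, hn, hinv _ _ hyC⟩
  · push_neg at hca
    exfalso
    obtain ⟨γ1, δ1, -, -, htrans⟩ := hsh
    have e0 : x0 = α := hca x0 hx0
    have e1 : γ1 • α = α := by
      have h1 := hca _ (hinv γ1 x0 hx0)
      rw [e0] at h1; exact h1
    have e2 : δ1 • α = α := by
      have h1 := hca _ (hinv δ1 x0 hx0)
      rw [e0] at h1; exact h1
    exact htrans ⟨α, e1, e2⟩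

lemma one_not_hyp [T2Space Ω] (hsh : StronglyHypHomeoAction Γ Ω) :
    ¬ IsHypHomeo Ω (1 : Γ) := by
  rintro ⟨ω0, hsink⟩
  rw [isSinkOf_iff] at hsink
  obtain ⟨α0, h1⟩ := hsink
  have hall : ∀ x : Ω, x = α0 ∨ x = ω0 := fun x => h1.fix_mem (one_smul Γ x)
  obtain ⟨γ1, δ1, ⟨s1, hγs⟩, ⟨s2, hδs⟩, htrans⟩ := hsh
  rw [isSinkOf_iff] at hγs hδs
  obtain ⟨r1, hγ⟩ := hγs
  obtain ⟨r2, hδ⟩ := hδs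
  have Ps1 : γ1 • s1 = s1 := hγ.2.1
  have Qs2 : δ1 • s2 = s2 := hδ.2.1
  have Qr2 : δ1 • r2 = r2 := hδ.1
  have hs12 : s1 ≠ s2 := fun e => htrans ⟨s1, Ps1, by rw [e]; exact Qs2⟩
  have hs1r2 : s1 ≠ r2 := fun e => htrans ⟨s1, Ps1, by rw [e]; exact Qr2⟩
  have hW : ({s1}ᶜ : Set Ω) ∈ nhds s2 :=
    IsOpen.mem_nhds isOpen_compl_singleton (by simpa using hs12.symm)
  obtain ⟨n, hn⟩ := hδ.attract hs1r2 hW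
  have hne : δ1 ^ n • s1 ≠ s1 := by simpa using hn
  have hfix2 : δ1 ^ n • s2 = s2 := fixed_pow Qs2 n
  have hkey : δ1 ^ n • s1 ≠ s2 := by
    intro e
    exact hs12 (smul_left_cancel (δ1 ^ n) (by rw [e, hfix2]))
  rcases hall s1 with e1|e1 <;> rcases hall s2 with e2|e2 <;>
    rcases hall (δ1 ^ n • s1) with e3|e3 <;>
      first
        | exact hs12 (e1.trans e2.symm)
        | exact hne (e3.trans e1.symm)
        | exact hkey (e3.trans e2.symm)

lemma sep_nbhd [T2Space Ω] (hcont : ActsByHomeos Γ Ω) (F : Finset Γ) {ω : Ω} :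
    (∀ f ∈ F, f • ω ≠ ω) →
    ∃ U : Set Ω, IsOpen U ∧ ω ∈ U ∧ ∀ f ∈ F, ∀ x ∈ U, f • x ∉ U := by
  classical
  induction F using Finset.induction_on with
  | empty => exact fun _ => ⟨Set.univ, isOpen_univ, Set.mem_univ ω, by simp⟩
  | @insert f F' hf ih =>
    intro hF
    obtain ⟨U0, hU0o, hU0ω, hU0⟩ := ih (fun g hg => hF g (Finset.mem_insert_of_mem hg))
    have hfω : f • ω ≠ ω := hF f (Finset.mem_insert_self f F')
    obtain ⟨V, W, hVo, hWo, hωV, hfωW, hVW⟩ := t2_separation hfω.symm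
    refine ⟨U0 ∩ V ∩ (fun x => f • x) ⁻¹' W,
      ((hU0o.inter hVo).inter ((hWo.preimage (hcont f)))), ⟨⟨hU0ω, hωV⟩, hfωW⟩, ?_⟩
    intro g hg x hx hgx
    rcases Finset.mem_insert.mp hg with rfl | hg'
    · exact Set.disjoint_left.mp hVW hgx.1.2 hx.2
    · exact hU0 g hg' x hx.1.1 hgx.1.1

end MyAux2
theorem statement18 {Γ : Type*} [Group Γ] {Ω : Type*} [TopologicalSpace Ω] [T2Space Ω]
    [MulAction Γ Ω] (hcont : ActsByHomeos Γ Ω)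
    (hsh : StronglyHypHomeoAction Γ Ω)
    (hfaith : StronglyFaithfulOn Γ (sinkSet Ω (⊤ : Subgroup Γ)))
    (N : Subgroup Γ) (hN : N.Normal)
    (hhyp : ∃ γ ∈ N, IsHypHomeo Ω γ) :
    closure (sinkSet Ω N) = closure (sinkSet Ω (⊤ : Subgroup Γ)) ∧ IsPowersGroup N := by
  classical
  obtain ⟨γ0, hγ0N, hγ0hyp⟩ := hhyp
  obtain ⟨ω0, hω0sink⟩ := hγ0hyp
  have hω0sink' := hω0sink
  rw [isSinkOf_iff] at hω0sink'
  obtain ⟨α0, h0⟩ := hω0sink'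
  -- invariance of closure (sinkSet Ω N)
  have himg : ∀ g : Γ, (fun y : Ω => g • y) '' sinkSet Ω N ⊆ sinkSet Ω N := by
    rintro g _ ⟨y, ⟨γ, hγN, hsink⟩, rfl⟩
    rw [isSinkOf_iff] at hsink
    obtain ⟨α, hy⟩ := hsink
    exact ⟨g * γ * g⁻¹, hN.conj_mem γ hγN g, ⟨g • α, hy.conj hcont g⟩⟩
  have hinv : ∀ g : Γ, ∀ x ∈ closure (sinkSet Ω N), g • x ∈ closure (sinkSet Ω N) := by
    intro g x hx
    have h2 := image_closure_subset_closure_image (s := sinkSet Ω N) (hcont g)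
    exact closure_mono (himg g) (h2 ⟨x, hx, rfl⟩)
  have hne : (closure (sinkSet Ω N)).Nonempty :=
    ⟨ω0, subset_closure ⟨γ0, hγ0N, hω0sink⟩⟩
  -- Part 1
  have hpart1 : closure (sinkSet Ω N) = closure (sinkSet Ω (⊤ : Subgroup Γ)) := by
    apply Set.Subset.antisymm
    · exact closure_mono (fun x ⟨γ, _, hs⟩ => ⟨γ, Subgroup.mem_top γ, hs⟩)
    · have hsub : sinkSet Ω (⊤ : Subgroup Γ) ⊆ closure (sinkSet Ω N) := by
        rintro ω ⟨γ, -, hs⟩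
        rw [isSinkOf_iff] at hs
        obtain ⟨α, hs⟩ := hs
        exact sink_mem_closed_inv hsh isClosed_closure hinv hne hs
      calc closure (sinkSet Ω (⊤ : Subgroup Γ))
          ⊆ closure (closure (sinkSet Ω N)) := closure_mono hsub
        _ = closure (sinkSet Ω N) := closure_closure
  refine ⟨hpart1, ?_, ?_⟩
  -- Nontrivial N
  · have hγ0ne : γ0 ≠ 1 := by
      intro e
      exact one_not_hyp hsh (e ▸ (⟨ω0, hω0sink⟩ : IsHypHomeo Ω γ0))
    exact ⟨⟨γ0, hγ0N⟩, 1, fun e => hγ0ne (by simpa [Subtype.ext_iff] using e)⟩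
  -- Powers condition
  intro F hF1 k hk
  set F' : Finset Γ := F.image (fun f : ↥N => (f : Γ)) with hF'def
  have h1notF' : (1 : Γ) ∉ F' := by
    intro hmem
    obtain ⟨f, hfF, hf1⟩ := Finset.mem_image.mp hmem
    exact hF1 (by rwa [show f = 1 from OneMemClass.coe_eq_one.mp hf1] at hfF)
  obtain ⟨ω, hωL, hωmove⟩ := hfaith F' h1notF'
  obtain ⟨U, hUo, hωU, hUsep⟩ := sep_nbhd hcont F' (fun f hf => hωmove f hf)
  -- ω is a sink of some c with source β
  obtain ⟨c, -, hcsink⟩ := hωL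
  rw [isSinkOf_iff] at hcsink
  obtain ⟨β, hc⟩ := hcsink
  -- choose a hyperbolic element not fixing β
  obtain ⟨γ1, δ1, hγ1h, hδ1h, htrans⟩ := id hsh
  obtain ⟨t, hth, htβ⟩ : ∃ t : Γ, IsHypHomeo Ω t ∧ t • β ≠ β := by
    by_cases e : γ1 • β = β
    · exact ⟨δ1, hδ1h, fun e2 => htrans ⟨β, e, e2⟩⟩
    · exact ⟨γ1, hγ1h, e⟩
  obtain ⟨st, hstsink⟩ := hth
  rw [isSinkOf_iff] at hstsink
  obtain ⟨rt, hts⟩ := hstsink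
  have ht2 : t⁻¹ • β ≠ β := fun e => htβ ((inv_smul_eq_iff.mp e).symm)
  have ht4 : t⁻¹ ^ 2 • β ≠ β := by
    intro e
    rcases (hts.inv.sq).fix_mem e with e'|e'
    · exact htβ (by rw [e']; exact hts.2.1)
    · exact htβ (by rw [e']; exact hts.1)
  have d01 : β ≠ t⁻¹ • β := Ne.symm ht2
  have d02 : β ≠ t⁻¹ ^ 2 • β := Ne.symm ht4
  have d12 : t⁻¹ • β ≠ t⁻¹ ^ 2 • β := by
    intro e
    apply ht2
    have : t⁻¹ ^ 2 • β = t⁻¹ • t⁻¹ • β := by rw [sq, mul_smul]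
    rw [this] at e
    exact (smul_left_cancel t⁻¹ e).symm
  -- pick g1 with g1⁻¹ • β avoiding the sink and source of γ0
  obtain ⟨g1, hg1ω, hg1α⟩ : ∃ g1 : Γ, g1⁻¹ • β ≠ ω0 ∧ g1⁻¹ • β ≠ α0 := by
    by_contra hcon
    push_neg at hcon
    have key : ∀ g1 : Γ, g1⁻¹ • β = ω0 ∨ g1⁻¹ • β = α0 := by
      intro g1
      by_cases e : g1⁻¹ • β = ω0
      · exact Or.inl e
      · exact Or.inr (hcon g1 e)
    have k0 := key 1
    have k1 := key t
    have k2 := key (t ^ 2)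
    rw [inv_one, one_smul] at k0
    rw [← inv_pow] at k2
    rcases k0 with k0|k0 <;> rcases k1 with k1|k1 <;> rcases k2 with k2|k2 <;>
      first
        | exact d01 (k0.trans k1.symm)
        | exact d02 (k0.trans k2.symm)
        | exact d12 (k1.trans k2.symm)
  have hb1 : g1 • ω0 ≠ β := fun e => hg1ω (by rw [← e, inv_smul_smul])
  have hb2 : g1 • α0 ≠ β := fun e => hg1α (by rw [← e, inv_smul_smul])
  -- a neighbourhood of β avoiding g1 • ω0 and g1 • α0
  have hVnhds : ({g1 • ω0, g1 • α0}ᶜ : Set Ω) ∈ nhds β := by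
    apply IsOpen.mem_nhds
    · exact (Set.Finite.isClosed (by simp)).isOpen_compl
    · simp [hb1.symm, hb2.symm]
  obtain ⟨n1, hn1⟩ := (hc.2.2 _ hVnhds U (hUo.mem_nhds hωU)).exists
  set g : Γ := c ^ n1 * g1 with hgdef
  have hgω0 : g • ω0 ∈ U := by
    rw [hgdef, mul_smul]
    exact hn1.1 (g1 • ω0) (by simp)
  have hgα0 : g • α0 ∈ U := by
    rw [hgdef, mul_smul]
    exact hn1.1 (g1 • α0) (by simp)
  set θ : Γ := g * γ0 * g⁻¹ with hθdef
  have hθN : θ ∈ N := hN.conj_mem γ0 hγ0N g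
  have hθ : SinkSrc θ (g • ω0) (g • α0) := h0.conj hcont g
  obtain ⟨n0, hn0⟩ := Filter.eventually_atTop.mp
    (hθ.2.2 U (hUo.mem_nhds hgα0) U (hUo.mem_nhds hgω0))
  set θN : ↥N := ⟨θ, hθN⟩ with hθNdef
  refine ⟨{h : ↥N | (h : Γ) • ω ∈ U}, fun i => θN ^ (n0 * ((i : ℕ) + 1)), ?_, ?_⟩
  · -- translates of C by F are disjoint from C
    intro f hf
    rw [Set.eq_empty_iff_forall_notMem]
    rintro x ⟨⟨a, haC, rfl⟩, hxC⟩
    have hfU : (f : Γ) • ((a : Γ) • ω) ∉ U :=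
      hUsep (f : Γ) (Finset.mem_image_of_mem _ hf) _ haC
    apply hfU
    rw [← mul_smul, ← Subgroup.coe_mul]
    exact hxC
  · -- translates of the complement are pairwise disjoint
    have main : ∀ i j : Fin k, (j : ℕ) < (i : ℕ) →
        (fun x => θN ^ (n0 * ((i : ℕ) + 1)) * x) '' {h : ↥N | (h : Γ) • ω ∈ U}ᶜ ∩
        (fun x => θN ^ (n0 * ((j : ℕ) + 1)) * x) '' {h : ↥N | (h : Γ) • ω ∈ U}ᶜ = ∅ := by
      intro i j hij
      rw [Set.eq_empty_iff_forall_notMem]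
      rintro x ⟨⟨a, ha, hxa⟩, ⟨b, hb, hxb⟩⟩
      have hm : n0 * ((i : ℕ) + 1) = n0 * ((j : ℕ) + 1) + n0 * ((i : ℕ) - (j : ℕ)) := by
        rw [← Nat.mul_add]
        congr 1
        omega
      have heq : θN ^ (n0 * ((i : ℕ) + 1)) * a = θN ^ (n0 * ((j : ℕ) + 1)) * b :=
        hxa.trans hxb.symm
      rw [hm, pow_add, mul_assoc] at heq
      have hb' : b = θN ^ (n0 * ((i : ℕ) - (j : ℕ))) * a := (mul_left_cancel heq).symm
      have hmge : n0 ≤ n0 * ((i : ℕ) - (j : ℕ)) := by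
        calc n0 = n0 * 1 := (mul_one n0).symm
          _ ≤ n0 * ((i : ℕ) - (j : ℕ)) := Nat.mul_le_mul_left n0 (by omega)
      have hstep := (hn0 _ hmge).1 ((a : Γ) • ω) ha
      apply hb
      show (b : Γ) • ω ∈ U
      rw [hb', Subgroup.coe_mul, mul_smul]
      have : ((θN ^ (n0 * ((i : ℕ) - (j : ℕ))) : ↥N) : Γ) = θ ^ (n0 * ((i : ℕ) - (j : ℕ))) := by
        push_cast
        rfl
      rw [this]
      exact hstep
    intro i j hij
    rcases lt_trichotomy (j : ℕ) (i : ℕ) with h | h | h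
    · exact main i j h
    · exact absurd (Fin.ext h.symm) hij
    · rw [Set.inter_comm]
      exact main j i h
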